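/- arXiv:2305.11893 — 4 statements merged into one kernel-verified Lean document; each statement's English description precedes it below -/
import Mathlib

section
/- Let F : ℝ² → ℝ be smooth and satisfy the Helmholtz equation ∂²F/∂s² + ∂²F/∂y² + (π²n²/H²)F = 0 for a positive integer n and H > 0. Then p(t,x,y,z) = F(x−Vt, y) + (cos(πnz/H)·P − βH²/(π²n²) − V)·y satisfies the (3+1)-dimensional Charney–Obukhov equation ∂_t Δp + ∂_x p ∂_y Δp − ∂_y p ∂_x Δp + β ∂_x p = 0 for all real P, V, β. -/
open Real

noncomputable section

/-- Partial derivative in `t` of `p t x y z`. -/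
def pdt (p : ℝ → ℝ → ℝ → ℝ → ℝ) (t x y z : ℝ) : ℝ := deriv (fun t' => p t' x y z) t
/-- Partial derivative in `x`. -/
def pdx (p : ℝ → ℝ → ℝ → ℝ → ℝ) (t x y z : ℝ) : ℝ := deriv (fun x' => p t x' y z) x
/-- Partial derivative in `y`. -/
def pdy (p : ℝ → ℝ → ℝ → ℝ → ℝ) (t x y z : ℝ) : ℝ := deriv (fun y' => p t x y' z) y
/-- Partial derivative in `z`. -/
def pdz (p : ℝ → ℝ → ℝ → ℝ → ℝ) (t x y z : ℝ) : ℝ := deriv (fun z' => p t x y z') z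

/-- Spatial Laplacian in `(x, y, z)`. -/
def lap3d (p : ℝ → ℝ → ℝ → ℝ → ℝ) (t x y z : ℝ) : ℝ :=
  pdx (pdx p) t x y z + pdy (pdy p) t x y z + pdz (pdz p) t x y z

/-- Charney–Obukhov operator. -/
def CO (β : ℝ) (p : ℝ → ℝ → ℝ → ℝ → ℝ) (t x y z : ℝ) : ℝ :=
  pdt (lap3d p) t x y z + pdx p t x y z * pdy (lap3d p) t x y z
    - pdy p t x y z * pdx (lap3d p) t x y z + β * pdx p t x y z

/-- Boundary condition operator `p_{zt} − p_y p_{zx} + p_x p_{zy}`. -/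
def Bop (p : ℝ → ℝ → ℝ → ℝ → ℝ) (t x y z : ℝ) : ℝ :=
  pdt (pdz p) t x y z - pdy p t x y z * pdx (pdz p) t x y z
    + pdx p t x y z * pdy (pdz p) t x y z

/-- Partial derivative in the first variable `s` of a two-variable function. -/
def dS (F : ℝ → ℝ → ℝ) (s y : ℝ) : ℝ := deriv (fun s' => F s' y) s
/-- Partial derivative in the second variable `y` of a two-variable function. -/
def dY (F : ℝ → ℝ → ℝ) (s y : ℝ) : ℝ := deriv (fun y' => F s y') y

/-- Smoothness of a two-variable function. -/
def Smooth2 (F : ℝ → ℝ → ℝ) : Prop := ContDiff ℝ (⊤ : ℕ∞) (fun q : ℝ × ℝ => F q.1 q.2)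

lemma hda_fst {F : ℝ → ℝ → ℝ} (hF : Smooth2 F) (s y : ℝ) :
    HasDerivAt (fun s' => F s' y)
      (fderiv ℝ (fun q : ℝ × ℝ => F q.1 q.2) (s, y) (1, 0)) s := by
  have h2 : HasDerivAt (fun s' : ℝ => ((s', y) : ℝ × ℝ)) ((1 : ℝ), (0 : ℝ)) s :=
    HasDerivAt.prodMk (hasDerivAt_id s) (hasDerivAt_const s y)
  exact ((hF.differentiable (by simp) (s, y)).hasFDerivAt).comp_hasDerivAt s h2

lemma hda_snd {F : ℝ → ℝ → ℝ} (hF : Smooth2 F) (s y : ℝ) :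
    HasDerivAt (fun y' => F s y')
      (fderiv ℝ (fun q : ℝ × ℝ => F q.1 q.2) (s, y) (0, 1)) y := by
  have h2 : HasDerivAt (fun y' : ℝ => ((s, y') : ℝ × ℝ)) ((0 : ℝ), (1 : ℝ)) y :=
    HasDerivAt.prodMk (hasDerivAt_const y s) (hasDerivAt_id y)
  exact ((hF.differentiable (by simp) (s, y)).hasFDerivAt).comp_hasDerivAt y h2

lemma hasDerivAt_dS {F : ℝ → ℝ → ℝ} (hF : Smooth2 F) (s y : ℝ) :
    HasDerivAt (fun s' => F s' y) (dS F s y) s :=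
  (hda_fst hF s y).differentiableAt.hasDerivAt

lemma hasDerivAt_dY {F : ℝ → ℝ → ℝ} (hF : Smooth2 F) (s y : ℝ) :
    HasDerivAt (fun y' => F s y') (dY F s y) y :=
  (hda_snd hF s y).differentiableAt.hasDerivAt

lemma smooth_dS {F : ℝ → ℝ → ℝ} (hF : Smooth2 F) : Smooth2 (dS F) := by
  have h1 : ContDiff ℝ (⊤ : ℕ∞) (fun q : ℝ × ℝ =>
      fderiv ℝ (fun q : ℝ × ℝ => F q.1 q.2) q ((1 : ℝ), (0 : ℝ))) :=
    (hF.fderiv_right (by simp)).clm_apply contDiff_const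
  have e : (fun q : ℝ × ℝ => dS F q.1 q.2)
      = fun q : ℝ × ℝ => fderiv ℝ (fun q : ℝ × ℝ => F q.1 q.2) q ((1 : ℝ), (0 : ℝ)) := by
    funext q
    exact (hda_fst hF q.1 q.2).deriv
  rw [Smooth2, e]; exact h1

lemma smooth_dY {F : ℝ → ℝ → ℝ} (hF : Smooth2 F) : Smooth2 (dY F) := by
  have h1 : ContDiff ℝ (⊤ : ℕ∞) (fun q : ℝ × ℝ =>
      fderiv ℝ (fun q : ℝ × ℝ => F q.1 q.2) q ((0 : ℝ), (1 : ℝ))) :=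
    (hF.fderiv_right (by simp)).clm_apply contDiff_const
  have e : (fun q : ℝ × ℝ => dY F q.1 q.2)
      = fun q : ℝ × ℝ => fderiv ℝ (fun q : ℝ × ℝ => F q.1 q.2) q ((0 : ℝ), (1 : ℝ)) := by
    funext q
    exact (hda_snd hF q.1 q.2).deriv
  rw [Smooth2, e]; exact h1

lemma smooth2_const_mul {F : ℝ → ℝ → ℝ} (hF : Smooth2 F) (c : ℝ) :
    Smooth2 (fun s y => c * F s y) :=
  contDiff_const.mul hF

lemma dS_const_mul {F : ℝ → ℝ → ℝ} (hF : Smooth2 F) (c s y : ℝ) :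
    dS (fun s y => c * F s y) s y = c * dS F s y :=
  ((hasDerivAt_dS hF s y).const_mul c).deriv

lemma dY_const_mul {F : ℝ → ℝ → ℝ} (hF : Smooth2 F) (c s y : ℝ) :
    dY (fun s y => c * F s y) s y = c * dY F s y :=
  ((hasDerivAt_dY hF s y).const_mul c).deriv

def psol (F : ℝ → ℝ → ℝ) (V : ℝ) (K : ℝ → ℝ) : ℝ → ℝ → ℝ → ℝ → ℝ :=
  fun t x y z => F (x - V * t) y + K z * y

lemma pdt_psol {F : ℝ → ℝ → ℝ} (hF : Smooth2 F) {V : ℝ} {K : ℝ → ℝ} (t x y z : ℝ) :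
    pdt (psol F V K) t x y z = -V * dS F (x - V * t) y := by
  have hi : HasDerivAt (fun t' : ℝ => x - V * t') (-V) t := by
    simpa using ((hasDerivAt_id t).const_mul V).const_sub x
  have h2 : HasDerivAt (fun t' => psol F V K t' x y z)
      (dS F (x - V * t) y * -V) t :=
    ((hasDerivAt_dS hF (x - V * t) y).comp t hi).add_const (K z * y)
  show deriv (fun t' => psol F V K t' x y z) t = _
  rw [h2.deriv]; ring

lemma pdx_psol {F : ℝ → ℝ → ℝ} (hF : Smooth2 F) {V : ℝ} {K : ℝ → ℝ} (t x y z : ℝ) :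
    pdx (psol F V K) t x y z = dS F (x - V * t) y := by
  have hi : HasDerivAt (fun x' : ℝ => x' - V * t) 1 x := (hasDerivAt_id x).sub_const _
  have h2 : HasDerivAt (fun x' => psol F V K t x' y z)
      (dS F (x - V * t) y * 1) x :=
    ((hasDerivAt_dS hF (x - V * t) y).comp x hi).add_const (K z * y)
  show deriv (fun x' => psol F V K t x' y z) x = _
  rw [h2.deriv]; ring

lemma pdy_psol {F : ℝ → ℝ → ℝ} (hF : Smooth2 F) {V : ℝ} {K : ℝ → ℝ} (t x y z : ℝ) :
    pdy (psol F V K) t x y z = dY F (x - V * t) y + K z := by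
  have h2 : HasDerivAt (fun y' => psol F V K t x y' z)
      (dY F (x - V * t) y + K z * 1) y :=
    (hasDerivAt_dY hF (x - V * t) y).add ((hasDerivAt_id y).const_mul (K z))
  show deriv (fun y' => psol F V K t x y' z) y = _
  rw [h2.deriv]; ring

lemma pdz_psol {F : ℝ → ℝ → ℝ} {V : ℝ} {K K' : ℝ → ℝ}
    (hK' : ∀ w, HasDerivAt K (K' w) w) (t x y z : ℝ) :
    pdz (psol F V K) t x y z = K' z * y := by
  have h2 : HasDerivAt (fun z' => psol F V K t x y z') (K' z * y) z :=
    ((hK' z).mul_const y).const_add (F (x - V * t) y)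
  exact h2.deriv

lemma pdxx_psol {F : ℝ → ℝ → ℝ} (hF : Smooth2 F) {V : ℝ} {K : ℝ → ℝ} (t x y z : ℝ) :
    pdx (pdx (psol F V K)) t x y z = dS (dS F) (x - V * t) y := by
  have e : (fun x' => pdx (psol F V K) t x' y z) = fun x' => dS F (x' - V * t) y :=
    funext fun x' => pdx_psol hF t x' y z
  show deriv (fun x' => pdx (psol F V K) t x' y z) x = _
  rw [e]
  have hi : HasDerivAt (fun x' : ℝ => x' - V * t) 1 x := (hasDerivAt_id x).sub_const _
  have h2 : HasDerivAt (fun x' => dS F (x' - V * t) y)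
      (dS (dS F) (x - V * t) y * 1) x :=
    (hasDerivAt_dS (smooth_dS hF) (x - V * t) y).comp x hi
  rw [h2.deriv]; ring

lemma pdyy_psol {F : ℝ → ℝ → ℝ} (hF : Smooth2 F) {V : ℝ} {K : ℝ → ℝ} (t x y z : ℝ) :
    pdy (pdy (psol F V K)) t x y z = dY (dY F) (x - V * t) y := by
  have e : (fun y' => pdy (psol F V K) t x y' z) = fun y' => dY F (x - V * t) y' + K z :=
    funext fun y' => pdy_psol hF t x y' z
  show deriv (fun y' => pdy (psol F V K) t x y' z) y = _
  rw [e]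
  have h2 : HasDerivAt (fun y' => dY F (x - V * t) y' + K z)
      (dY (dY F) (x - V * t) y) y :=
    (hasDerivAt_dY (smooth_dY hF) (x - V * t) y).add_const (K z)
  exact h2.deriv

lemma pdzz_psol {F : ℝ → ℝ → ℝ} {V : ℝ} {K K' K'' : ℝ → ℝ}
    (hK' : ∀ w, HasDerivAt K (K' w) w) (hK'' : ∀ w, HasDerivAt K' (K'' w) w) (t x y z : ℝ) :
    pdz (pdz (psol F V K)) t x y z = K'' z * y := by
  have e : (fun z' => pdz (psol F V K) t x y z') = fun z' => K' z' * y :=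
    funext fun z' => pdz_psol hK' t x y z'
  show deriv (fun z' => pdz (psol F V K) t x y z') z = _
  rw [e]
  exact ((hK'' z).mul_const y).deriv

lemma lap3d_psol {F : ℝ → ℝ → ℝ} (hF : Smooth2 F) {V : ℝ} {K K' K'' : ℝ → ℝ}
    (hK' : ∀ w, HasDerivAt K (K' w) w) (hK'' : ∀ w, HasDerivAt K' (K'' w) w) (t x y z : ℝ) :
    lap3d (psol F V K) t x y z
      = dS (dS F) (x - V * t) y + dY (dY F) (x - V * t) y + K'' z * y := by
  unfold lap3d
  rw [pdxx_psol hF, pdyy_psol hF, pdzz_psol hK' hK'']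

/-- Solution 1 satisfies the Charney–Obukhov equation. -/
theorem stmt_1 (F : ℝ → ℝ → ℝ) (n : ℕ) (H P V β : ℝ)
    (hn : 0 < n) (hH : 0 < H) (hF : Smooth2 F)
    (hHelm : ∀ s y, dS (dS F) s y + dY (dY F) s y + (π ^ 2 * (n : ℝ) ^ 2 / H ^ 2) * F s y = 0) :
    ∀ t x y z, CO β
      (fun t x y z => F (x - V * t) y
        + (Real.cos (π * n * z / H) * P - β * H ^ 2 / (π ^ 2 * (n : ℝ) ^ 2) - V) * y)
      t x y z = 0 := by
  intro t x y z
  have hπ : (π : ℝ) ≠ 0 := Real.pi_ne_zero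
  have hH0 : H ≠ 0 := ne_of_gt hH
  have hn0 : (n : ℝ) ≠ 0 := Nat.cast_ne_zero.mpr hn.ne'
  -- the vertical profile and its derivatives
  have hlin : ∀ w : ℝ, HasDerivAt (fun z' : ℝ => π * ↑n * z' / H) (π * ↑n / H) w := by
    intro w
    simpa using (((hasDerivAt_id w).const_mul (π * (n : ℝ))).div_const H)
  have h_cos : ∀ w : ℝ, HasDerivAt (fun z' : ℝ => Real.cos (π * ↑n * z' / H))
      (-Real.sin (π * ↑n * w / H) * (π * ↑n / H)) w := fun w => (hlin w).cos
  have h_sin : ∀ w : ℝ, HasDerivAt (fun z' : ℝ => Real.sin (π * ↑n * z' / H))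
      (Real.cos (π * ↑n * w / H) * (π * ↑n / H)) w := fun w => (hlin w).sin
  have hK' : ∀ w, HasDerivAt
      (fun w : ℝ => Real.cos (π * ↑n * w / H) * P - β * H ^ 2 / (π ^ 2 * (n : ℝ) ^ 2) - V)
      ((fun w : ℝ => -Real.sin (π * ↑n * w / H) * (π * ↑n / H) * P) w) w := by
    intro w
    exact (((h_cos w).mul_const P).sub_const (β * H ^ 2 / (π ^ 2 * (n : ℝ) ^ 2))).sub_const V
  have hK'' : ∀ w, HasDerivAt
      (fun w : ℝ => -Real.sin (π * ↑n * w / H) * (π * ↑n / H) * P)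
      ((fun w : ℝ => -(Real.cos (π * ↑n * w / H) * (π * ↑n / H)) * (π * ↑n / H) * P) w) w := by
    intro w
    exact (((h_sin w).neg.mul_const (π * ↑n / H)).mul_const P)
  set K : ℝ → ℝ :=
    fun w => Real.cos (π * ↑n * w / H) * P - β * H ^ 2 / (π ^ 2 * (n : ℝ) ^ 2) - V with hKdef
  set G : ℝ → ℝ → ℝ := fun s y => -(π ^ 2 * (n : ℝ) ^ 2 / H ^ 2) * F s y with hGdef
  set K2 : ℝ → ℝ :=
    fun w => -(π ^ 2 * (n : ℝ) ^ 2 / H ^ 2) * (P * Real.cos (π * ↑n * w / H)) with hK2def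
  have hG : Smooth2 G := smooth2_const_mul hF _
  have hlap : ∀ t' x' y' z', lap3d (psol F V K) t' x' y' z' = psol G V K2 t' x' y' z' := by
    intro t' x' y' z'
    rw [lap3d_psol hF hK' hK'' t' x' y' z']
    show _ = G (x' - V * t') y' + K2 z' * y'
    rw [hGdef, hK2def]
    have hh := hHelm (x' - V * t') y'
    linear_combination hh
  show CO β (psol F V K) t x y z = 0
  have ht : pdt (lap3d (psol F V K)) t x y z = -V * dS G (x - V * t) y := by
    show deriv (fun t' => lap3d (psol F V K) t' x y z) t = _
    have e : (fun t' => lap3d (psol F V K) t' x y z) = fun t' => psol G V K2 t' x y z :=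
      funext fun t' => hlap t' x y z
    rw [e]
    exact pdt_psol hG t x y z
  have hx : pdx (lap3d (psol F V K)) t x y z = dS G (x - V * t) y := by
    show deriv (fun x' => lap3d (psol F V K) t x' y z) x = _
    have e : (fun x' => lap3d (psol F V K) t x' y z) = fun x' => psol G V K2 t x' y z :=
      funext fun x' => hlap t x' y z
    rw [e]
    exact pdx_psol hG t x y z
  have hy : pdy (lap3d (psol F V K)) t x y z = dY G (x - V * t) y + K2 z := by
    show deriv (fun y' => lap3d (psol F V K) t x y' z) y = _
    have e : (fun y' => lap3d (psol F V K) t x y' z) = fun y' => psol G V K2 t x y' z :=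
      funext fun y' => hlap t x y' z
    rw [e]
    exact pdy_psol hG t x y z
  have hdSG : dS G (x - V * t) y = -(π ^ 2 * (n : ℝ) ^ 2 / H ^ 2) * dS F (x - V * t) y := by
    rw [hGdef]; exact dS_const_mul hF _ _ _
  have hdYG : dY G (x - V * t) y = -(π ^ 2 * (n : ℝ) ^ 2 / H ^ 2) * dY F (x - V * t) y := by
    rw [hGdef]; exact dY_const_mul hF _ _ _
  rw [CO, ht, hx, hy, pdx_psol hF, pdy_psol hF, hdSG, hdYG, hKdef, hK2def]
  field_simp
  ring
end
end

section
/- For p(t,x,y,z) = F(x−Vt, y) + (cos(πnz/H)·P − βH²/(π²n²) − V)·y with F smooth, the boundary operator B[p] = ∂²p/∂z∂t − ∂_y p · ∂²p/∂z∂x + ∂_x p · ∂²p/∂z∂y equals −(∂_x F)(x−Vt,y) · sin(πnz/H) · πnP/H; in particular B[p] vanishes at z = 0 and z = H. -/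
open Real

noncomputable section

/-- the boundary operator on Solution 1, and its vanishing at `z = 0, H`. -/
theorem stmt_2 (F : ℝ → ℝ → ℝ) (n : ℕ) (H P V β : ℝ)
    (hn : 0 < n) (hH : 0 < H) (hF : Smooth2 F) :
    (∀ t x y z, Bop
      (fun t x y z => F (x - V * t) y
        + (Real.cos (π * n * z / H) * P - β * H ^ 2 / (π ^ 2 * (n : ℝ) ^ 2) - V) * y)
      t x y z = -(dS F (x - V * t) y) * Real.sin (π * n * z / H) * (π * n * P / H)) ∧
    (∀ t x y, Bop
      (fun t x y z => F (x - V * t) y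
        + (Real.cos (π * n * z / H) * P - β * H ^ 2 / (π ^ 2 * (n : ℝ) ^ 2) - V) * y)
      t x y 0 = 0 ∧
      Bop
      (fun t x y z => F (x - V * t) y
        + (Real.cos (π * n * z / H) * P - β * H ^ 2 / (π ^ 2 * (n : ℝ) ^ 2) - V) * y)
      t x y H = 0) := by

  set p : ℝ → ℝ → ℝ → ℝ → ℝ := fun t x y z => F (x - V * t) y
      + (Real.cos (π * n * z / H) * P - β * H ^ 2 / (π ^ 2 * (n : ℝ) ^ 2) - V) * y with hp
  have hFs : ∀ y : ℝ, Differentiable ℝ (fun s => F s y) := fun y =>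
    (hF.comp (contDiff_id.prodMk contDiff_const)).differentiable (by simp)
  have hcos : ∀ z : ℝ, HasDerivAt (fun z' => Real.cos (π * n * z' / H))
      (-Real.sin (π * n * z / H) * (π * n / H)) z := by
    intro z
    have h1 : HasDerivAt (fun z' : ℝ => π * n / H * z') (π * n / H) z := by
      simpa using (hasDerivAt_id z).const_mul (π * ↑n / H)
    have h2 := h1.cos
    have heq : (fun z' : ℝ => Real.cos (π * ↑n / H * z'))
        = fun z' => Real.cos (π * ↑n * z' / H) := by
      funext z'; ring_nf
    rw [heq] at h2
    convert h2 using 2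
    ring_nf
  have hpdz : ∀ t x y z, pdz p t x y z = -Real.sin (π * n * z / H) * (π * n / H) * P * y := by
    intro t x y z
    have h : HasDerivAt (fun z' => p t x y z')
        (-Real.sin (π * n * z / H) * (π * n / H) * P * y) z := by
      have h3 := (((((hcos z).mul_const P).sub_const
        (β * H ^ 2 / (π ^ 2 * (n : ℝ) ^ 2))).sub_const V).mul_const y).const_add
        (F (x - V * t) y)
      convert h3 using 1
    exact h.deriv
  have hBt : ∀ t x y z, pdt (pdz p) t x y z = 0 := by
    intro t x y z
    have he : (fun t' => pdz p t' x y z)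
        = fun _ => -Real.sin (π * n * z / H) * (π * n / H) * P * y := by
      funext t'; rw [hpdz]
    rw [pdt, he, deriv_const]
  have hBx : ∀ t x y z, pdx (pdz p) t x y z = 0 := by
    intro t x y z
    have he : (fun x' => pdz p t x' y z)
        = fun _ => -Real.sin (π * n * z / H) * (π * n / H) * P * y := by
      funext x'; rw [hpdz]
    rw [pdx, he, deriv_const]
  have hBy : ∀ t x y z, pdy (pdz p) t x y z = -Real.sin (π * n * z / H) * (π * n / H) * P := by
    intro t x y z
    have he : (fun y' => pdz p t x y' z)
        = fun y' => -Real.sin (π * n * z / H) * (π * n / H) * P * y' := by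
      funext y'; rw [hpdz]
    rw [pdy, he]
    simpa using (((hasDerivAt_id y).const_mul
      (-Real.sin (π * ↑n * z / H) * (π * ↑n / H) * P))).deriv
  have hpx : ∀ t x y z, pdx p t x y z = dS F (x - V * t) y := by
    intro t x y z
    have hi : HasDerivAt (fun x' : ℝ => x' - V * t) 1 x := (hasDerivAt_id x).sub_const _
    have hf : HasDerivAt (fun s => F s y) (dS F (x - V * t) y) (x - V * t) :=
      ((hFs y) (x - V * t)).hasDerivAt
    have h1 : HasDerivAt (fun x' => F (x' - V * t) y) (dS F (x - V * t) y) x := by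
      simpa [Function.comp_def] using hf.comp x hi
    exact (h1.add_const _).deriv
  have hmain : ∀ t x y z, Bop p t x y z
      = -(dS F (x - V * t) y) * Real.sin (π * n * z / H) * (π * n * P / H) := by
    intro t x y z
    rw [Bop, hBt, hBx, hBy, hpx]
    ring
  refine ⟨hmain, fun t x y => ⟨?_, ?_⟩⟩
  · rw [hmain]; simp
  · rw [hmain]
    have hz : π * ↑n * H / H = ↑n * π := by field_simp
    rw [hz, Real.sin_nat_mul_pi]
    ring
end
end

section
/- Let K² = k_z² + K_r² and F smooth with F_ss + F_yy + K_r² F = 0. Then p = cos(k_z z)·F(x−Vt,y) + (β(cos(Kz)M − 1)/K² − V)·y satisfies the Charney–Obukhov equation for any constant M, and the boundary operator B[p] = p_{zt} − p_y p_{zx} + p_x p_{zy} equals (∂_x F)(x−Vt,y)·(β/K²)·(M(k_z sin(k_z z)cos(Kz) − K cos(k_z z)sin(Kz)) − k_z sin(k_z z)). -/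
open Real

noncomputable section

/-- Solution 3 satisfies the Charney–Obukhov equation, and
the boundary operator on it. -/
theorem stmt_5 (F : ℝ → ℝ → ℝ) (kz Kr K V β M : ℝ)
    (hK : K ^ 2 = kz ^ 2 + Kr ^ 2) (hK0 : K ≠ 0) (hF : Smooth2 F)
    (hHelm : ∀ s y, dS (dS F) s y + dY (dY F) s y + Kr ^ 2 * F s y = 0) :
    (∀ t x y z, CO β
      (fun t x y z => Real.cos (kz * z) * F (x - V * t) y
        + (β * (Real.cos (K * z) * M - 1) / K ^ 2 - V) * y)
      t x y z = 0) ∧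
    (∀ t x y z, Bop
      (fun t x y z => Real.cos (kz * z) * F (x - V * t) y
        + (β * (Real.cos (K * z) * M - 1) / K ^ 2 - V) * y)
      t x y z = dS F (x - V * t) y * (β / K ^ 2)
        * (M * (kz * Real.sin (kz * z) * Real.cos (K * z)
            - K * Real.cos (kz * z) * Real.sin (K * z))
          - kz * Real.sin (kz * z))) := by
  have hK2 : K ^ 2 ≠ 0 := pow_ne_zero 2 hK0
  set f : ℝ × ℝ → ℝ := fun q => F q.1 q.2 with hfdef
  have hfd : Differentiable ℝ f := hF.differentiable (by simp)
  -- first partials as fderiv applications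
  have hS : ∀ s y, HasDerivAt (fun s' => F s' y) (dS F s y) s := by
    intro s y
    have h : HasDerivAt (fun s' => F s' y) (fderiv ℝ f (s, y) (1, 0)) s := by
      have h' := (hfd (s,y)).hasFDerivAt.comp_hasDerivAt s ((hasDerivAt_id s).prodMk (hasDerivAt_const s y)); exact h'
    have hd := h.deriv
    rw [dS, hd]; exact h
  have hYd : ∀ s y, HasDerivAt (fun y' => F s y') (dY F s y) y := by
    intro s y
    have h : HasDerivAt (fun y' => F s y') (fderiv ℝ f (s, y) (0, 1)) y :=
      (hfd (s,y)).hasFDerivAt.comp_hasDerivAt y ((hasDerivAt_const y s).prodMk (hasDerivAt_id y))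
    have hd := h.deriv
    rw [dY, hd]; exact h
  -- dS F and dY F differentiable in respective slots
  have hg1 : ContDiff ℝ (⊤ : ℕ∞) (fun q : ℝ × ℝ => fderiv ℝ f q ((1:ℝ),(0:ℝ))) :=
    (hF.fderiv_right (le_refl _)).clm_apply contDiff_const
  have hg2 : ContDiff ℝ (⊤ : ℕ∞) (fun q : ℝ × ℝ => fderiv ℝ f q ((0:ℝ),(1:ℝ))) :=
    (hF.fderiv_right (le_refl _)).clm_apply contDiff_const
  have hdSeq : ∀ s y, dS F s y = fderiv ℝ f (s, y) (1, 0) := by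
    intro s y
    exact ((hfd (s,y)).hasFDerivAt.comp_hasDerivAt s
      ((hasDerivAt_id s).prodMk (hasDerivAt_const s y))).deriv
  have hdYeq : ∀ s y, dY F s y = fderiv ℝ f (s, y) (0, 1) := by
    intro s y
    exact ((hfd (s,y)).hasFDerivAt.comp_hasDerivAt y
      ((hasDerivAt_const y s).prodMk (hasDerivAt_id y))).deriv
  have hSS : ∀ s y, HasDerivAt (fun s' => dS F s' y) (dS (dS F) s y) s := by
    intro s y
    have hdiff : DifferentiableAt ℝ (fun s' => dS F s' y) s := by
      have : (fun s' => dS F s' y) = fun s' => fderiv ℝ f (s', y) ((1:ℝ),(0:ℝ)) :=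
        funext fun s' => hdSeq s' y
      rw [this]
      have h' := ((hg1.differentiable (by simp)) ((s,y))).comp s
        (show DifferentiableAt ℝ (fun s' : ℝ => (s', y)) s from (differentiableAt_id (x := s)).prodMk (differentiableAt_const y)); exact h'
    exact hdiff.hasDerivAt
  have hYY : ∀ s y, HasDerivAt (fun y' => dY F s y') (dY (dY F) s y) y := by
    intro s y
    have hdiff : DifferentiableAt ℝ (fun y' => dY F s y') y := by
      have : (fun y' => dY F s y') = fun y' => fderiv ℝ f (s, y') ((0:ℝ),(1:ℝ)) :=
        funext fun y' => hdYeq s y'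
      rw [this]
      exact ((hg2.differentiable (by simp)) ((s,y))).comp y
        ((differentiableAt_const s).prodMk (differentiableAt_id))
    exact hdiff.hasDerivAt

  set P : ℝ → ℝ → ℝ → ℝ → ℝ := fun t x y z => Real.cos (kz * z) * F (x - V * t) y
        + (β * (Real.cos (K * z) * M - 1) / K ^ 2 - V) * y with hP
  -- first partial derivatives of P
  have hPx : ∀ t x y z, pdx P t x y z = Real.cos (kz*z) * dS F (x - V*t) y := by
    intro t x y z
    have h : HasDerivAt (fun x' => P t x' y z)
        (Real.cos (kz*z) * (dS F (x - V*t) y * 1)) x :=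
      (((hS (x - V*t) y).comp x ((hasDerivAt_id x).sub_const (V*t))).const_mul _).add_const _
    rw [pdx, h.deriv]; ring
  have hPy : ∀ t x y z, pdy P t x y z = Real.cos (kz*z) * dY F (x - V*t) y
      + (β * (Real.cos (K * z) * M - 1) / K ^ 2 - V) := by
    intro t x y z
    have h : HasDerivAt (fun y' => P t x y' z)
        (Real.cos (kz*z) * dY F (x - V*t) y + (β * (Real.cos (K * z) * M - 1) / K ^ 2 - V) * 1) y :=
      ((hYd (x - V*t) y).const_mul _).add ((hasDerivAt_id y).const_mul _)
    rw [pdy, h.deriv]; ring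
  have hct : ∀ c z : ℝ, HasDerivAt (fun z' : ℝ => Real.cos (c * z')) (-(c * Real.sin (c*z))) z := by
    intro c z
    have h := (Real.hasDerivAt_cos (c*z)).comp z ((hasDerivAt_id z).const_mul c)
    rw [show -(c * Real.sin (c*z)) = -Real.sin (c * z) * (c * 1) by ring]; exact h
  have hPz : ∀ t x y z, pdz P t x y z = -(kz * Real.sin (kz*z)) * F (x - V*t) y
      - (β * M * Real.sin (K*z) / K) * y := by
    intro t x y z
    have h : HasDerivAt (fun z' => P t x y z')
        (-(kz * Real.sin (kz*z)) * F (x - V*t) y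
          + (β * (-(K * Real.sin (K*z)) * M) / K ^ 2) * y) z := by
      have h1 := (hct kz z).mul_const (F (x - V*t) y)
      have h2 := (((((hct K z).mul_const M).sub_const 1).const_mul β).div_const (K^2)).sub_const V
      exact h1.add (h2.mul_const y)
    rw [pdz, h.deriv]
    field_simp
    ring
  -- second partials
  have hPxx : ∀ t x y z, pdx (pdx P) t x y z = Real.cos (kz*z) * dS (dS F) (x - V*t) y := by
    intro t x y z
    have he : (fun x' => pdx P t x' y z) = fun x' => Real.cos (kz*z) * dS F (x' - V*t) y :=
      funext fun x' => hPx t x' y z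
    have h : HasDerivAt (fun x' => Real.cos (kz*z) * dS F (x' - V*t) y)
        (Real.cos (kz*z) * (dS (dS F) (x - V*t) y * 1)) x :=
      (((hSS (x - V*t) y).comp x ((hasDerivAt_id x).sub_const (V*t))).const_mul _)
    rw [pdx, he, h.deriv]; ring
  have hPyy : ∀ t x y z, pdy (pdy P) t x y z = Real.cos (kz*z) * dY (dY F) (x - V*t) y := by
    intro t x y z
    have he : (fun y' => pdy P t x y' z) = fun y' => Real.cos (kz*z) * dY F (x - V*t) y'
        + (β * (Real.cos (K * z) * M - 1) / K ^ 2 - V) :=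
      funext fun y' => hPy t x y' z
    have h : HasDerivAt (fun y' => Real.cos (kz*z) * dY F (x - V*t) y'
        + (β * (Real.cos (K * z) * M - 1) / K ^ 2 - V))
        (Real.cos (kz*z) * dY (dY F) (x - V*t) y) y :=
      (((hYY (x - V*t) y).const_mul _)).add_const _
    rw [pdy, he, h.deriv]
  have hst : ∀ c z : ℝ, HasDerivAt (fun z' : ℝ => Real.sin (c * z')) (c * Real.cos (c*z)) z := by
    intro c z
    have h := (Real.hasDerivAt_sin (c*z)).comp z ((hasDerivAt_id z).const_mul c)
    rw [show c * Real.cos (c*z) = Real.cos (c * z) * (c * 1) by ring]; exact h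
  have hPzz : ∀ t x y z, pdz (pdz P) t x y z = -(kz^2 * Real.cos (kz*z)) * F (x - V*t) y
      - β * M * Real.cos (K*z) * y := by
    intro t x y z
    have he : (fun z' => pdz P t x y z') = fun z' => -(kz * Real.sin (kz*z')) * F (x - V*t) y
        - (β * M * Real.sin (K*z') / K) * y :=
      funext fun z' => hPz t x y z'
    have h : HasDerivAt (fun z' => -(kz * Real.sin (kz*z')) * F (x - V*t) y
        - (β * M * Real.sin (K*z') / K) * y)
        (-(kz * (kz * Real.cos (kz*z))) * F (x - V*t) y
          - (β * M * (K * Real.cos (K*z)) / K) * y) z := by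
      have h1 := (((hst kz z).const_mul kz).neg).mul_const (F (x - V*t) y)
      have h2 := ((((hst K z).const_mul (β * M)).div_const K).mul_const y)
      exact h1.sub h2
    rw [pdz, he, h.deriv]
    field_simp
  -- the Laplacian
  have hL : ∀ t x y z, lap3d P t x y z
      = -(K^2) * (Real.cos (kz*z) * F (x - V*t) y) - β * M * Real.cos (K*z) * y := by
    intro t x y z
    rw [lap3d, hPxx, hPyy, hPzz]
    have hh := hHelm (x - V*t) y
    linear_combination Real.cos (kz*z) * hh + Real.cos (kz*z) * F (x - V*t) y * hK
  -- derivatives of the Laplacian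
  have hLt : ∀ t x y z, pdt (lap3d P) t x y z
      = -(K^2) * (Real.cos (kz*z) * (dS F (x - V*t) y * (0 - V*1))) := by
    intro t x y z
    have he : (fun t' => lap3d P t' x y z)
        = fun t' => -(K^2) * (Real.cos (kz*z) * F (x - V*t') y) - β * M * Real.cos (K*z) * y :=
      funext fun t' => hL t' x y z
    have hin : HasDerivAt (fun t' => x - V*t') (0 - V*1) t :=
      (hasDerivAt_const t x).sub ((hasDerivAt_id t).const_mul V)
    have h : HasDerivAt (fun t' => -(K^2) * (Real.cos (kz*z) * F (x - V*t') y)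
          - β * M * Real.cos (K*z) * y)
        (-(K^2) * (Real.cos (kz*z) * (dS F (x - V*t) y * (0 - V*1)))) t :=
      ((((hS (x - V*t) y).comp t hin).const_mul _).const_mul _).sub_const _
    rw [pdt, he, h.deriv]
  have hLx : ∀ t x y z, pdx (lap3d P) t x y z
      = -(K^2) * (Real.cos (kz*z) * (dS F (x - V*t) y * 1)) := by
    intro t x y z
    have he : (fun x' => lap3d P t x' y z)
        = fun x' => -(K^2) * (Real.cos (kz*z) * F (x' - V*t) y) - β * M * Real.cos (K*z) * y :=
      funext fun x' => hL t x' y z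
    have h : HasDerivAt (fun x' => -(K^2) * (Real.cos (kz*z) * F (x' - V*t) y)
          - β * M * Real.cos (K*z) * y)
        (-(K^2) * (Real.cos (kz*z) * (dS F (x - V*t) y * 1))) x :=
      ((((hS (x - V*t) y).comp x ((hasDerivAt_id x).sub_const (V*t))).const_mul _).const_mul _).sub_const _
    rw [pdx, he, h.deriv]
  have hLy : ∀ t x y z, pdy (lap3d P) t x y z
      = -(K^2) * (Real.cos (kz*z) * dY F (x - V*t) y) - β * M * Real.cos (K*z) * 1 := by
    intro t x y z
    have he : (fun y' => lap3d P t x y' z)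
        = fun y' => -(K^2) * (Real.cos (kz*z) * F (x - V*t) y') - β * M * Real.cos (K*z) * y' :=
      funext fun y' => hL t x y' z
    have h : HasDerivAt (fun y' => -(K^2) * (Real.cos (kz*z) * F (x - V*t) y')
          - β * M * Real.cos (K*z) * y')
        (-(K^2) * (Real.cos (kz*z) * dY F (x - V*t) y) - β * M * Real.cos (K*z) * 1) y := by
      have h1 := (((hYd (x - V*t) y).const_mul (Real.cos (kz*z))).const_mul (-(K^2)))
      have h2 := (hasDerivAt_id y).const_mul (β * M * Real.cos (K*z))
      exact h1.sub h2
    rw [pdy, he, h.deriv]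
  -- derivatives of pdz P
  have hPzt : ∀ t x y z, pdt (pdz P) t x y z
      = -(kz * Real.sin (kz*z)) * (dS F (x - V*t) y * (0 - V*1)) := by
    intro t x y z
    have he : (fun t' => pdz P t' x y z)
        = fun t' => -(kz * Real.sin (kz*z)) * F (x - V*t') y - (β * M * Real.sin (K*z) / K) * y :=
      funext fun t' => hPz t' x y z
    have hin : HasDerivAt (fun t' => x - V*t') (0 - V*1) t :=
      (hasDerivAt_const t x).sub ((hasDerivAt_id t).const_mul V)
    have h : HasDerivAt (fun t' => -(kz * Real.sin (kz*z)) * F (x - V*t') y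
          - (β * M * Real.sin (K*z) / K) * y)
        (-(kz * Real.sin (kz*z)) * (dS F (x - V*t) y * (0 - V*1))) t :=
      (((hS (x - V*t) y).comp t hin).const_mul _).sub_const _
    rw [pdt, he, h.deriv]
  have hPzx : ∀ t x y z, pdx (pdz P) t x y z
      = -(kz * Real.sin (kz*z)) * (dS F (x - V*t) y * 1) := by
    intro t x y z
    have he : (fun x' => pdz P t x' y z)
        = fun x' => -(kz * Real.sin (kz*z)) * F (x' - V*t) y - (β * M * Real.sin (K*z) / K) * y :=
      funext fun x' => hPz t x' y z
    have h : HasDerivAt (fun x' => -(kz * Real.sin (kz*z)) * F (x' - V*t) y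
          - (β * M * Real.sin (K*z) / K) * y)
        (-(kz * Real.sin (kz*z)) * (dS F (x - V*t) y * 1)) x :=
      (((hS (x - V*t) y).comp x ((hasDerivAt_id x).sub_const (V*t))).const_mul _).sub_const _
    rw [pdx, he, h.deriv]
  have hPzy : ∀ t x y z, pdy (pdz P) t x y z
      = -(kz * Real.sin (kz*z)) * dY F (x - V*t) y - (β * M * Real.sin (K*z) / K) * 1 := by
    intro t x y z
    have he : (fun y' => pdz P t x y' z)
        = fun y' => -(kz * Real.sin (kz*z)) * F (x - V*t) y' - (β * M * Real.sin (K*z) / K) * y' :=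
      funext fun y' => hPz t x y' z
    have h : HasDerivAt (fun y' => -(kz * Real.sin (kz*z)) * F (x - V*t) y'
          - (β * M * Real.sin (K*z) / K) * y')
        (-(kz * Real.sin (kz*z)) * dY F (x - V*t) y - (β * M * Real.sin (K*z) / K) * 1) y :=
      ((hYd (x - V*t) y).const_mul _).sub ((hasDerivAt_id y).const_mul _)
    rw [pdy, he, h.deriv]
  constructor
  · intro t x y z
    rw [CO, hLt, hLx, hLy, hPx, hPy]
    field_simp
    ring
  · intro t x y z
    rw [Bop, hPzt, hPzx, hPzy, hPx, hPy]
    field_simp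
    ring
end
end

section
/- Let k_z > K_r > 0, K² = k_z² − K_r², and F smooth with F_ss + F_yy + K_r² F = 0. Then p = sinh(k_z z)·F(x−Vt,y) + (β(sinh(Kz)M − cosh(Kz) + 1)/K² − V)·y satisfies the Charney–Obukhov equation for any constant M. -/
open Real

noncomputable section

/- Auxiliary lemmas -/

lemma dS_fderiv (F : ℝ → ℝ → ℝ) (hF : Smooth2 F) (s y : ℝ) :
    HasDerivAt (fun s' => F s' y) (fderiv ℝ (fun q : ℝ × ℝ => F q.1 q.2) (s, y) (1, 0)) s := by
  have h := ((hF.differentiable (by simp) (s, y)).hasFDerivAt).comp_hasDerivAt s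
    ((hasDerivAt_id s).prodMk (hasDerivAt_const s y))
  simpa [Function.comp_def] using h

lemma dY_fderiv (F : ℝ → ℝ → ℝ) (hF : Smooth2 F) (s y : ℝ) :
    HasDerivAt (fun y' => F s y') (fderiv ℝ (fun q : ℝ × ℝ => F q.1 q.2) (s, y) (0, 1)) y := by
  have h := ((hF.differentiable (by simp) (s, y)).hasFDerivAt).comp_hasDerivAt y
    ((hasDerivAt_const y s).prodMk (hasDerivAt_id y))
  simpa [Function.comp_def] using h

lemma hdS (F : ℝ → ℝ → ℝ) (hF : Smooth2 F) (s y : ℝ) :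
    HasDerivAt (fun s' => F s' y) (dS F s y) s := by
  have h := dS_fderiv F hF s y
  have h2 : dS F s y = fderiv ℝ (fun q : ℝ × ℝ => F q.1 q.2) (s, y) (1, 0) := h.deriv
  rw [h2]; exact h

lemma hdY (F : ℝ → ℝ → ℝ) (hF : Smooth2 F) (s y : ℝ) :
    HasDerivAt (fun y' => F s y') (dY F s y) y := by
  have h := dY_fderiv F hF s y
  have h2 : dY F s y = fderiv ℝ (fun q : ℝ × ℝ => F q.1 q.2) (s, y) (0, 1) := h.deriv
  rw [h2]; exact h

lemma smoothS (F : ℝ → ℝ → ℝ) (hF : Smooth2 F) : Smooth2 (dS F) := by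
  have h1 : ContDiff ℝ (⊤ : ℕ∞) fun q : ℝ × ℝ => fderiv ℝ (fun q : ℝ × ℝ => F q.1 q.2) q ((1 : ℝ), (0 : ℝ)) :=
    (hF.fderiv_right (by simp)).clm_apply contDiff_const
  have h2 : (fun q : ℝ × ℝ => dS F q.1 q.2)
      = fun q : ℝ × ℝ => fderiv ℝ (fun q : ℝ × ℝ => F q.1 q.2) q ((1 : ℝ), (0 : ℝ)) := by
    funext q
    exact (dS_fderiv F hF q.1 q.2).deriv
  rw [Smooth2, h2]; exact h1

lemma smoothY (F : ℝ → ℝ → ℝ) (hF : Smooth2 F) : Smooth2 (dY F) := by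
  have h1 : ContDiff ℝ (⊤ : ℕ∞) fun q : ℝ × ℝ => fderiv ℝ (fun q : ℝ × ℝ => F q.1 q.2) q ((0 : ℝ), (1 : ℝ)) :=
    (hF.fderiv_right (by simp)).clm_apply contDiff_const
  have h2 : (fun q : ℝ × ℝ => dY F q.1 q.2)
      = fun q : ℝ × ℝ => fderiv ℝ (fun q : ℝ × ℝ => F q.1 q.2) q ((0 : ℝ), (1 : ℝ)) := by
    funext q
    exact (dY_fderiv F hF q.1 q.2).deriv
  rw [Smooth2, h2]; exact h1

/-- Solution 5 satisfies the Charney–Obukhov equation. -/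
theorem stmt_9 (F : ℝ → ℝ → ℝ) (kz Kr K V β M : ℝ)
    (hKr : 0 < Kr) (hkz : Kr < kz) (hK : K ^ 2 = kz ^ 2 - Kr ^ 2) (hKpos : 0 < K)
    (hF : Smooth2 F)
    (hHelm : ∀ s y, dS (dS F) s y + dY (dY F) s y + Kr ^ 2 * F s y = 0) :
    ∀ t x y z, CO β
      (fun t x y z => Real.sinh (kz * z) * F (x - V * t) y
        + (β * (Real.sinh (K * z) * M - Real.cosh (K * z) + 1) / K ^ 2 - V) * y)
      t x y z = 0 := by
  have hK0 : K ≠ 0 := ne_of_gt hKpos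
  have hFs := smoothS F hF
  have hFy := smoothY F hF
  set P : ℝ → ℝ → ℝ → ℝ → ℝ := fun t x y z => Real.sinh (kz * z) * F (x - V * t) y
        + (β * (Real.sinh (K * z) * M - Real.cosh (K * z) + 1) / K ^ 2 - V) * y with hP
  -- first derivatives
  have e_px : pdx P = fun t x y z => Real.sinh (kz * z) * dS F (x - V * t) y := by
    funext t x y z
    have h := (((hdS F hF (x - V * t) y).comp x
      ((hasDerivAt_id x).sub_const (V * t))).const_mul (Real.sinh (kz * z))).add_const
      ((β * (Real.sinh (K * z) * M - Real.cosh (K * z) + 1) / K ^ 2 - V) * y)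
    have h2 : deriv (fun x' => P t x' y z) x = _ := h.deriv
    rw [pdx, h2]; ring
  have e_py : pdy P = fun t x y z => Real.sinh (kz * z) * dY F (x - V * t) y
      + (β * (Real.sinh (K * z) * M - Real.cosh (K * z) + 1) / K ^ 2 - V) := by
    funext t x y z
    have h := (((hdY F hF (x - V * t) y)).const_mul (Real.sinh (kz * z))).add
      ((hasDerivAt_id y).const_mul
        (β * (Real.sinh (K * z) * M - Real.cosh (K * z) + 1) / K ^ 2 - V))
    have h2 : deriv (fun y' => P t x y' z) y = _ := h.deriv
    rw [pdy, h2]; ring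
  have e_pz : pdz P = fun t x y z => Real.cosh (kz * z) * kz * F (x - V * t) y
      + β * (Real.cosh (K * z) * K * M - Real.sinh (K * z) * K) / K ^ 2 * y := by
    funext t x y z
    have hs : HasDerivAt (fun z' => Real.sinh (kz * z')) (Real.cosh (kz * z) * (kz * 1)) z :=
      (Real.hasDerivAt_sinh (kz * z)).comp z ((hasDerivAt_id z).const_mul kz)
    have hs2 : HasDerivAt (fun z' => Real.sinh (K * z')) (Real.cosh (K * z) * (K * 1)) z :=
      (Real.hasDerivAt_sinh (K * z)).comp z ((hasDerivAt_id z).const_mul K)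
    have hc2 : HasDerivAt (fun z' => Real.cosh (K * z')) (Real.sinh (K * z) * (K * 1)) z :=
      (Real.hasDerivAt_cosh (K * z)).comp z ((hasDerivAt_id z).const_mul K)
    have hcv := (((((hs2.mul_const M).sub hc2).add_const 1).const_mul β).div_const
      (K ^ 2)).sub_const V
    have h := (hs.mul_const (F (x - V * t) y)).add (hcv.mul_const y)
    have h2 : deriv (fun z' => P t x y z') z = _ := h.deriv
    rw [pdz, h2]; ring
  -- second derivatives
  have e_pxx : pdx (pdx P) = fun t x y z => Real.sinh (kz * z) * dS (dS F) (x - V * t) y := by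
    funext t x y z
    have h := ((hdS (dS F) hFs (x - V * t) y).comp x
      ((hasDerivAt_id x).sub_const (V * t))).const_mul (Real.sinh (kz * z))
    simp only [e_px]; simp only [pdx]
    have h2 : deriv (fun x' => Real.sinh (kz * z) * dS F (x' - V * t) y) x = _ := h.deriv
    rw [h2]; ring
  have e_pyy : pdy (pdy P) = fun t x y z => Real.sinh (kz * z) * dY (dY F) (x - V * t) y := by
    funext t x y z
    have h := ((hdY (dY F) hFy (x - V * t) y).const_mul (Real.sinh (kz * z))).add_const
      (β * (Real.sinh (K * z) * M - Real.cosh (K * z) + 1) / K ^ 2 - V)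
    simp only [e_py]; simp only [pdy]
    have h2 : deriv (fun y' => Real.sinh (kz * z) * dY F (x - V * t) y'
      + (β * (Real.sinh (K * z) * M - Real.cosh (K * z) + 1) / K ^ 2 - V)) y = _ := h.deriv
    rw [h2]
  have e_pzz : pdz (pdz P) = fun t x y z => kz ^ 2 * Real.sinh (kz * z) * F (x - V * t) y
      + β * (Real.sinh (K * z) * M - Real.cosh (K * z)) * y := by
    funext t x y z
    have hc : HasDerivAt (fun z' => Real.cosh (kz * z')) (Real.sinh (kz * z) * (kz * 1)) z :=
      (Real.hasDerivAt_cosh (kz * z)).comp z ((hasDerivAt_id z).const_mul kz)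
    have hs2 : HasDerivAt (fun z' => Real.sinh (K * z')) (Real.cosh (K * z) * (K * 1)) z :=
      (Real.hasDerivAt_sinh (K * z)).comp z ((hasDerivAt_id z).const_mul K)
    have hc2 : HasDerivAt (fun z' => Real.cosh (K * z')) (Real.sinh (K * z) * (K * 1)) z :=
      (Real.hasDerivAt_cosh (K * z)).comp z ((hasDerivAt_id z).const_mul K)
    have hcv := (((((hc2.mul_const K).mul_const M).sub (hs2.mul_const K)).const_mul
      β).div_const (K ^ 2))
    have h := ((hc.mul_const kz).mul_const (F (x - V * t) y)).add (hcv.mul_const y)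
    simp only [e_pz]; simp only [pdz]
    have h2 : deriv (fun z' => Real.cosh (kz * z') * kz * F (x - V * t) y
      + β * (Real.cosh (K * z') * K * M - Real.sinh (K * z') * K) / K ^ 2 * y) z = _ := h.deriv
    rw [h2]; field_simp
  -- the Laplacian
  have e_lap : lap3d P = fun t x y z => K ^ 2 * Real.sinh (kz * z) * F (x - V * t) y
      + β * (Real.sinh (K * z) * M - Real.cosh (K * z)) * y := by
    funext t x y z
    simp only [lap3d, e_pxx, e_pyy, e_pzz]
    linear_combination Real.sinh (kz * z) * hHelm (x - V * t) y
      - Real.sinh (kz * z) * F (x - V * t) y * hK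
  intro t x y z
  -- derivatives of the Laplacian
  have hLt : pdt (lap3d P) t x y z
      = K ^ 2 * Real.sinh (kz * z) * (dS F (x - V * t) y * -(V * 1)) := by
    have h := (((hdS F hF (x - V * t) y).comp t
      (((hasDerivAt_id t).const_mul V).const_sub x)).const_mul
        (K ^ 2 * Real.sinh (kz * z))).add_const
      (β * (Real.sinh (K * z) * M - Real.cosh (K * z)) * y)
    simp only [e_lap]; simp only [pdt]
    have h2 : deriv (fun t' => K ^ 2 * Real.sinh (kz * z) * F (x - V * t') y
      + β * (Real.sinh (K * z) * M - Real.cosh (K * z)) * y) t = _ := h.deriv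
    rw [h2]
  have hLx : pdx (lap3d P) t x y z
      = K ^ 2 * Real.sinh (kz * z) * dS F (x - V * t) y := by
    have h := (((hdS F hF (x - V * t) y).comp x
      ((hasDerivAt_id x).sub_const (V * t))).const_mul
        (K ^ 2 * Real.sinh (kz * z))).add_const
      (β * (Real.sinh (K * z) * M - Real.cosh (K * z)) * y)
    simp only [e_lap]; simp only [pdx]
    have h2 : deriv (fun x' => K ^ 2 * Real.sinh (kz * z) * F (x' - V * t) y
      + β * (Real.sinh (K * z) * M - Real.cosh (K * z)) * y) x = _ := h.deriv
    rw [h2]; ring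
  have hLy : pdy (lap3d P) t x y z
      = K ^ 2 * Real.sinh (kz * z) * dY F (x - V * t) y
        + β * (Real.sinh (K * z) * M - Real.cosh (K * z)) := by
    have h := ((hdY F hF (x - V * t) y).const_mul (K ^ 2 * Real.sinh (kz * z))).add
      ((hasDerivAt_id y).const_mul (β * (Real.sinh (K * z) * M - Real.cosh (K * z))))
    simp only [e_lap]; simp only [pdy]
    have h2 : deriv (fun y' => K ^ 2 * Real.sinh (kz * z) * F (x - V * t) y'
      + β * (Real.sinh (K * z) * M - Real.cosh (K * z)) * y') y = _ := h.deriv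
    rw [h2]; ring
  simp only [CO, hLt, hLx, hLy, e_px, e_py]
  field_simp
  ring
end
end
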